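/- arXiv:2009.05646 — 2 statements merged into one kernel-verified Lean document; each statement's English description precedes it below -/
import Mathlib

section
/- For any numerical set S (S ≠ ℕ), B(S) ∈ A(S) if and only if S ∩ [1, F(S) − B(S)] = ∅. -/
open Set

def IsNumericalSet (S : Set ℕ) : Prop := 0 ∈ S ∧ Sᶜ.Finite

def IsNumericalSemigroup (S : Set ℕ) : Prop :=
  IsNumericalSet S ∧ ∀ a ∈ S, ∀ b ∈ S, a + b ∈ S

/-- The associated set `A(S) = {s ∈ S : s + S ⊆ S}`. -/
def A (S : Set ℕ) : Set ℕ := {s ∈ S | ∀ t ∈ S, s + t ∈ S}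

/-- The Frobenius number: the largest gap of `S`. -/
noncomputable def F (S : Set ℕ) : ℕ := sSup Sᶜ

/-- The base: the largest element of `S` below `F S`. -/
noncomputable def B (S : Set ℕ) : ℕ := sSup {s | s ∈ S ∧ s < F S}

/-- The multiplicity: the smallest positive element of `S`. -/
noncomputable def m (S : Set ℕ) : ℕ := sInf {s | s ∈ S ∧ 0 < s}

/-- The complement numerical set (for `S ≠ ℕ`). -/
noncomputable def Stilde (S : Set ℕ) : Set ℕ :=
  {x | ∃ s ∈ S, s ≤ B S ∧ x = B S - s} ∪ {n | B S ≤ n}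

-- The complement operation, with the convention that the complement of ℕ is ℕ.
open Classical in
noncomputable def complOp (S : Set ℕ) : Set ℕ :=
  if S = Set.univ then Set.univ else Stilde S

/-- The genus: the number of gaps. -/
noncomputable def genus (S : Set ℕ) : ℕ := Sᶜ.ncard

/-- The number of boxes with hook length 1. -/
noncomputable def c1 (S : Set ℕ) : ℕ := {n | n ∈ S ∧ n + 1 ∉ S}.ncard

/-- An atom: a positive element not a sum of two positive elements. -/
def IsAtomOf (S : Set ℕ) (a : ℕ) : Prop :=
  a ∈ S ∧ 0 < a ∧ ¬ ∃ x ∈ S, ∃ y ∈ S, 0 < x ∧ 0 < y ∧ a = x + y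

/-- A small atom: an atom smaller than the Frobenius number. -/
def IsSmallAtom (S : Set ℕ) (a : ℕ) : Prop := IsAtomOf S a ∧ a < F S

/-- The embedding dimension: the number of atoms. -/
noncomputable def numAtoms (S : Set ℕ) : ℕ := {a | IsAtomOf S a}.ncard

/-- Maximal embedding dimension. -/
def MaxED (S : Set ℕ) : Prop := numAtoms S = m S

/-! If `B + x ∈ S` for some `0 < x ≤ F - B`, then `B + x` is an element of `S` in `(B, F)`,
contradicting the maximality of `B`; conversely every positive `t ∈ S` outside `[1, F - B]`
has `B + t > F`, so `B + t ∈ S`. -/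

lemma mem_of_F_lt {S : Set ℕ} (hfin : Sᶜ.Finite) {n : ℕ} (hn : F S < n) : n ∈ S := by
  by_contra h
  exact hn.not_ge (le_csSup hfin.bddAbove h)

lemma le_B {S : Set ℕ} {s : ℕ} (hs : s ∈ S) (hsF : s < F S) : s ≤ B S :=
  le_csSup ⟨F S, fun _ hx => hx.2.le⟩ ⟨hs, hsF⟩

namespace IsNumericalSet

variable {S : Set ℕ} (hS : IsNumericalSet S) (hne : S ≠ univ)
include hS hne

lemma F_notMem : F S ∉ S :=
  Nat.sSup_mem (nonempty_compl.mpr hne) hS.2.bddAbove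

lemma F_pos : 0 < F S :=
  Nat.pos_of_ne_zero fun h => hS.F_notMem hne (h ▸ hS.1)

lemma B_mem_and_lt_F : B S ∈ S ∧ B S < F S :=
  Nat.sSup_mem (s := {s | s ∈ S ∧ s < F S}) ⟨0, hS.1, hS.F_pos hne⟩ ⟨F S, fun _ hx => hx.2.le⟩

end IsNumericalSet

theorem base_mem_associated_iff (S : Set ℕ) (hS : IsNumericalSet S) (hne : S ≠ Set.univ) :
    B S ∈ A S ↔ S ∩ Set.Icc 1 (F S - B S) = ∅ := by
  obtain ⟨hBS, hBF⟩ := hS.B_mem_and_lt_F hne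
  rw [eq_empty_iff_forall_notMem]
  constructor
  · rintro ⟨-, hA⟩ x ⟨hxS, hx1, hx2⟩
    have hsum : B S + x ∈ S := hA x hxS
    have hlt : B S + x < F S :=
      lt_of_le_of_ne (by omega) fun h => hS.F_notMem hne (h ▸ hsum)
    have := le_B hsum hlt
    omega
  · intro hgap
    refine ⟨hBS, fun t ht => ?_⟩
    rcases Nat.eq_zero_or_pos t with rfl | htpos
    · simpa using hBS
    · have htF : F S - B S < t := by
        by_contra h
        exact hgap t ⟨ht, htpos, by omega⟩
      exact mem_of_F_lt hS.2 (by omega)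
end

section
/- Define S⁽⁰⁾ = S and S⁽ⁱ⁺¹⁾ = complement of S⁽ⁱ⁾ (with the convention that the complement of ℕ is ℕ). Then for any numerical set S, S⁽ᶜ¹⁽ˢ⁾⁾ = ℕ, and S⁽ⁿ⁾ ≠ ℕ for all n < c₁(S). -/
open Set

/-! A numerical set has as many descents (`n ∈ S`, `n + 1 ∉ S`) as ascents (`n ∉ S`, `n + 1 ∈ S`),
since its indicator starts at `0 ∈ S` and ends in the cofinite tail. The reflection `x ↦ B − x`
defining `S̃` turns the ascents of `S` below its base `B` into the descents of `S̃`, and the only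
ascent of `S` above `B` is the Frobenius number. Hence `c₁(S̃) = c₁(S) − 1` whenever `S ≠ ℕ`, while
`c₁` vanishes only on `ℕ`. -/

def descents (S : Set ℕ) : Set ℕ := {n | n ∈ S ∧ n + 1 ∉ S}

def ascents (S : Set ℕ) : Set ℕ := {n | n ∉ S ∧ n + 1 ∈ S}

theorem c1_eq_ncard_descents (S : Set ℕ) : c1 S = (descents S).ncard := rfl

theorem ncard_eq_card_filter_range {P : Set ℕ} [DecidablePred (· ∈ P)] {N : ℕ} (h : P ⊆ Iio N) :
    P.ncard = ((Finset.range N).filter (· ∈ P)).card := by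
  rw [← ncard_coe_finset]
  congr 1
  ext n
  simpa using fun hn => h hn

section NumericalSet

variable {S : Set ℕ}

theorem ncard_descents_eq_ncard_ascents (hS : IsNumericalSet S) :
    (descents S).ncard = (ascents S).ncard := by
  classical
  obtain ⟨N, hN⟩ := hS.2.bddAbove
  have htail : ∀ n, N < n → n ∈ S := fun n hn => by_contra fun h => (hN h).not_gt hn
  have hD : descents S ⊆ Iio (N + 1) := fun n hn => by
    have := hN hn.2; simp only [mem_Iio]; omega
  have hA : ascents S ⊆ Iio (N + 1) := fun n hn => by
    have := hN hn.1; simp only [mem_Iio]; omega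
  let f : ℕ → ℤ := fun n => if n ∈ S then 1 else 0
  have hterm : ∀ i, f i - f (i + 1) =
      (if i ∈ descents S then 1 else 0) - (if i ∈ ascents S then 1 else 0) := by
    intro i
    by_cases hi : i ∈ S <;> by_cases hi' : i + 1 ∈ S <;> simp [f, descents, ascents, hi, hi']
  have htelescope : ∑ i ∈ Finset.range (N + 1), (f i - f (i + 1)) = 0 := by
    rw [Finset.sum_range_sub']
    simp [f, hS.1, htail (N + 1) (Nat.lt_succ_self N)]
  simp only [hterm, Finset.sum_sub_distrib, Finset.sum_boole, sub_eq_zero, Nat.cast_inj] at htelescope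
  rw [ncard_eq_card_filter_range hD, ncard_eq_card_filter_range hA, htelescope]

theorem F_notMem (hS : IsNumericalSet S) (hne : S ≠ univ) : F S ∉ S :=
  Nat.sSup_mem (nonempty_compl.mpr hne) hS.2.bddAbove

theorem le_F_of_notMem (hS : IsNumericalSet S) {n : ℕ} (hn : n ∉ S) : n ≤ F S :=
  le_csSup hS.2.bddAbove hn

theorem bddAbove_lt_F (S : Set ℕ) : BddAbove {s | s ∈ S ∧ s < F S} :=
  ⟨F S, fun _ hx => le_of_lt hx.2⟩

theorem B_mem_and_lt_F (hS : IsNumericalSet S) (hne : S ≠ univ) : B S ∈ S ∧ B S < F S := by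
  have hF : 0 < F S := Nat.pos_of_ne_zero fun h => F_notMem hS hne (h ▸ hS.1)
  exact Nat.sSup_mem (⟨0, hS.1, hF⟩ : {s | s ∈ S ∧ s < F S}.Nonempty) (bddAbove_lt_F S)

theorem le_B_of_mem_of_lt_F {s : ℕ} (hs : s ∈ S) (hsF : s < F S) : s ≤ B S :=
  le_csSup (bddAbove_lt_F S) ⟨hs, hsF⟩

theorem mem_Stilde_iff {x : ℕ} : x ∈ Stilde S ↔ B S ≤ x ∨ B S - x ∈ S := by
  constructor
  · rintro (⟨s, hs, hsB, rfl⟩ | hx)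
    · exact Or.inr (by rwa [Nat.sub_sub_self hsB])
    · exact Or.inl hx
  · rintro (hx | hx)
    · exact Or.inr hx
    · rcases le_or_gt (B S) x with hBx | hxB
      · exact Or.inr hBx
      · exact Or.inl ⟨B S - x, hx, Nat.sub_le _ _, by omega⟩

theorem isNumericalSet_Stilde (hS : IsNumericalSet S) (hne : S ≠ univ) :
    IsNumericalSet (Stilde S) := by
  refine ⟨mem_Stilde_iff.mpr (Or.inr ?_), (finite_Iio (B S)).subset fun x hx => ?_⟩
  · simpa using (B_mem_and_lt_F hS hne).1
  · simp only [mem_compl_iff, mem_Stilde_iff, not_or, not_le] at hx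
    exact hx.1

theorem ascents_eq_insert_F (hS : IsNumericalSet S) (hne : S ≠ univ) :
    ascents S = insert (F S) (ascents S ∩ Iio (B S)) := by
  have hBS := (B_mem_and_lt_F hS hne).1
  have hFS := F_notMem hS hne
  ext n
  simp only [ascents, mem_insert_iff, mem_inter_iff, mem_Iio]
  constructor
  · rintro ⟨hn, hn1⟩
    rcases lt_or_ge n (B S) with hnB | hBn
    · exact Or.inr ⟨⟨hn, hn1⟩, hnB⟩
    left
    have hnB : B S < n := lt_of_le_of_ne hBn fun h => hn (h ▸ hBS)
    have hFn1 : F S ≤ n + 1 := not_lt.mp fun h => (le_B_of_mem_of_lt_F hn1 h).not_gt (by omega)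
    have := le_F_of_notMem hS hn
    have : n + 1 ≠ F S := fun h => hFS (h ▸ hn1)
    omega
  · rintro (rfl | ⟨h, -⟩)
    · exact ⟨hFS, by_contra fun h => (le_F_of_notMem hS h).not_gt (Nat.lt_succ_self _)⟩
    · exact h

theorem descents_Stilde (hS : IsNumericalSet S) :
    descents (Stilde S) = (fun n => B S - 1 - n) '' (ascents S ∩ Iio (B S)) := by
  ext x
  simp only [descents, ascents, mem_image, mem_inter_iff, mem_Iio, mem_Stilde_iff,
    not_or, not_le]
  constructor
  · rintro ⟨hx, hx1B, hx1S⟩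
    refine ⟨B S - (x + 1), ⟨⟨hx1S, ?_⟩, by omega⟩, by omega⟩
    rw [show B S - (x + 1) + 1 = B S - x by omega]
    exact hx.resolve_left (by omega)
  · rintro ⟨n, ⟨⟨hnS, hn1S⟩, hnB⟩, rfl⟩
    have hn : 0 < n := Nat.pos_of_ne_zero fun h => hnS (h ▸ hS.1)
    refine ⟨Or.inr ?_, by omega, ?_⟩
    · rwa [show B S - (B S - 1 - n) = n + 1 by omega]
    · rwa [show B S - (B S - 1 - n + 1) = n by omega]

theorem c1_Stilde_add_one (hS : IsNumericalSet S) (hne : S ≠ univ) :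
    c1 (Stilde S) + 1 = c1 S := by
  have hinj : InjOn (fun n => B S - 1 - n) (ascents S ∩ Iio (B S)) := fun a ha b hb hab => by
    simp only [mem_inter_iff, mem_Iio] at ha hb
    simp only at hab
    omega
  have hF : F S ∉ ascents S ∩ Iio (B S) := fun h => (B_mem_and_lt_F hS hne).2.not_gt h.2
  rw [c1_eq_ncard_descents, c1_eq_ncard_descents, descents_Stilde hS, hinj.ncard_image,
    ncard_descents_eq_ncard_ascents hS]
  conv_rhs => rw [ascents_eq_insert_F hS hne]
  exact (ncard_insert_of_notMem hF ((finite_Iio _).subset inter_subset_right)).symm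

theorem c1_eq_zero_iff (hS : IsNumericalSet S) : c1 S = 0 ↔ S = univ := by
  constructor
  · intro h
    by_contra hne
    have := c1_Stilde_add_one hS hne
    omega
  · rintro rfl
    simp [c1_eq_ncard_descents, descents]

theorem iterate_complOp_eq_univ_iff (hS : IsNumericalSet S) (n : ℕ) :
    complOp^[n] S = univ ↔ c1 S ≤ n := by
  induction n generalizing S with
  | zero => simpa using (c1_eq_zero_iff hS).symm
  | succ n ih =>
    rw [Function.iterate_succ_apply]
    by_cases hne : S = univ
    · subst hne
      have hfix : complOp (univ : Set ℕ) = univ := if_pos rfl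
      simp [hfix, Function.iterate_fixed hfix, (c1_eq_zero_iff hS).mpr rfl]
    · have hstep : complOp S = Stilde S := if_neg hne
      rw [hstep, ih (isNumericalSet_Stilde hS hne), ← c1_Stilde_add_one hS hne]
      omega

end NumericalSet

theorem iterated_complement_reaches_nat (S : Set ℕ) (hS : IsNumericalSet S) :
    complOp^[c1 S] S = Set.univ ∧ ∀ n < c1 S, complOp^[n] S ≠ Set.univ :=
  ⟨(iterate_complOp_eq_univ_iff hS _).mpr le_rfl,
    fun _ hn h => (iterate_complOp_eq_univ_iff hS _).mp h |>.not_gt hn⟩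
end
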